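/- Let G be a finite simple graph with a k-uniform list assignment L (that is, L assigns to each vertex v of G a set L(v) of colors with |L(v)| = k). Let S = {x_1, x_2, …, x_k} be a set of k pairwise distinct vertices of G. If the induced subgraph G − S has a proper coloring c with c(v) ∈ L(v) for all v ∈ V(G) − S in which each color appears on at most ⌈|V(G − S)|/k⌉ vertices, and |N_G(x_i) \ S| ≤ k − i for every i with 1 ≤ i ≤ k, then G has a proper coloring c' with c'(v) ∈ L(v) for all v ∈ V(G) in which each color appears on at most ⌈|V(G)|/k⌉ vertices. -/

import Mathlib

/-!
Colour `x₁, …, x_k` with pairwise distinct colours, giving `x_i` a colour from its list that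
does not occur on its neighbours outside `S`. This is possible because `x_i` has `k` admissible
colours, of which at most `k - i` occur on those neighbours and at most `i - 1` are taken by
`x₁, …, x_{i-1}`; in the form of Hall's condition, a set of indices with largest element `i` has
at most `i` members. As the colours on `S` are distinct, every colour class grows by at most one,
and `⌈(n - k)/k⌉ + 1 = ⌈n/k⌉`.
-/

open Finset Function

theorem exists_injective_mem_sdiff {α : Type*} [DecidableEq α] {n : ℕ} (L F : Fin n → Finset α)
    (h : ∀ i : Fin n, #(F i) + i < #(L i)) :
    ∃ d : Fin n → α, Injective d ∧ ∀ i, d i ∈ L i \ F i := by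
  refine (all_card_le_biUnion_card_iff_exists_injective _).1 fun s => ?_
  rcases s.eq_empty_or_nonempty with rfl | hs
  · simp
  set m := s.max' hs
  calc #s ≤ #(Iic m) := card_le_card fun i hi => mem_Iic.2 (s.le_max' i hi)
    _ = m + 1 := Fin.card_Iic m
    _ ≤ #(L m \ F m) := by have := h m; have := le_card_sdiff (F m) (L m); omega
    _ ≤ #(s.biUnion fun i => L i \ F i) :=
        card_le_card (subset_biUnion_of_mem (fun i => L i \ F i) (s.max'_mem hs))

section Extension

variable {V β : Type*} [DecidableEq V] {k : ℕ} {x : Fin k → V} {S : Finset V}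
  {c₀ : {v // v ∉ S} → β} {d : Fin k → β} {c : V → β}

theorem exists_extension_of_injective (hS : S = univ.image x) (hx : Injective x)
    (c₀ : {v // v ∉ S} → β) (d : Fin k → β) :
    ∃ c : V → β, (∀ i, c (x i) = d i) ∧ ∀ v : {v // v ∉ S}, c v = c₀ v := by
  have hxS : ∀ v ∈ S, ∃ i, x i = v := fun v hv => by simpa [hS] using hv
  choose idx hidx using hxS
  refine ⟨fun v => if h : v ∈ S then d (idx v h) else c₀ ⟨v, h⟩, fun i => ?_, fun v => dif_neg v.2⟩
  have hi : x i ∈ S := hS ▸ mem_image_of_mem x (mem_univ i)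
  simp only [dif_pos hi, hx (hidx _ hi)]

theorem mem_of_extension (hS : S = univ.image x) {L : V → Finset β} (hd : ∀ i, d i ∈ L (x i))
    (hc₀ : ∀ v : {v // v ∉ S}, c₀ v ∈ L v) (hcx : ∀ i, c (x i) = d i)
    (hc : ∀ v : {v // v ∉ S}, c v = c₀ v) (v : V) : c v ∈ L v := by
  by_cases hv : v ∈ S
  · obtain ⟨i, -, rfl⟩ := mem_image.1 (hS ▸ hv)
    exact hcx i ▸ hd i
  · exact hc ⟨v, hv⟩ ▸ hc₀ ⟨v, hv⟩

theorem card_filter_eq_le_of_extension [Fintype V] [DecidableEq β] (hS : S = univ.image x)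
    (hd : Injective d) (hcx : ∀ i, c (x i) = d i) (hc : ∀ v : {v // v ∉ S}, c v = c₀ v) (a : β) :
    #{v | c v = a} ≤ #{v : {v // v ∉ S} | c₀ v = a} + 1 := by
  have hS_le : #{v ∈ S | c v = a} ≤ 1 := by
    refine card_le_one.2 fun u hu w hw => ?_
    simp only [mem_filter, hS, mem_image, mem_univ, true_and] at hu hw
    obtain ⟨⟨i, rfl⟩, hi⟩ := hu
    obtain ⟨⟨j, rfl⟩, hj⟩ := hw
    rw [hcx] at hi hj
    rw [hd (hi.trans hj.symm)]
  calc #{v | c v = a}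
      ≤ #(map (Embedding.subtype _) {v : {v // v ∉ S} | c₀ v = a} ∪ {v ∈ S | c v = a}) := by
        refine card_le_card fun v hv => ?_
        by_cases hvS : v ∈ S
        · exact mem_union_right _ (mem_filter.2 ⟨hvS, (mem_filter.1 hv).2⟩)
        · refine mem_union_left _ (mem_map.2 ⟨⟨v, hvS⟩, mem_filter.2 ⟨mem_univ _, ?_⟩, rfl⟩)
          exact hc ⟨v, hvS⟩ ▸ (mem_filter.1 hv).2
    _ ≤ #{v : {v // v ∉ S} | c₀ v = a} + 1 := by
        grw [card_union_le, card_map, hS_le]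

end Extension

namespace SimpleGraph

variable {V β : Type*} [Fintype V] [DecidableEq V] (G : SimpleGraph V) [DecidableRel G.Adj]
  [DecidableEq β] {S : Finset V}

def outerNeighborColors (c₀ : {v // v ∉ S} → β) (v : V) : Finset β :=
  ((G.neighborFinset v).subtype (· ∉ S)).image c₀

theorem card_outerNeighborColors_le (c₀ : {v // v ∉ S} → β) (v : V) :
    #(G.outerNeighborColors c₀ v) ≤ #(G.neighborFinset v \ S) := by
  rw [sdiff_eq_filter, ← card_subtype]
  exact card_image_le

theorem mem_outerNeighborColors {c₀ : {v // v ∉ S} → β} {v : V} {u : {v // v ∉ S}}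
    (h : G.Adj v u) : c₀ u ∈ G.outerNeighborColors c₀ v :=
  mem_image_of_mem c₀ (mem_subtype.2 ((G.mem_neighborFinset v u).2 h))

theorem adj_ne_of_extension {k : ℕ} {x : Fin k → V} (hS : S = univ.image x)
    {c₀ : {v // v ∉ S} → β} (hc₀ : ∀ u v : {v // v ∉ S}, G.Adj u v → c₀ u ≠ c₀ v)
    {d : Fin k → β} (hd : Injective d) (hdN : ∀ i, d i ∉ G.outerNeighborColors c₀ (x i))
    {c : V → β} (hcx : ∀ i, c (x i) = d i) (hc : ∀ v : {v // v ∉ S}, c v = c₀ v) {u v : V}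
    (huv : G.Adj u v) : c u ≠ c v := by
  have hx_ne : ∀ i w, G.Adj (x i) w → c (x i) ≠ c w := by
    intro i w hw
    by_cases hwS : w ∈ S
    · obtain ⟨j, -, rfl⟩ := mem_image.1 (hS ▸ hwS)
      rw [hcx, hcx]
      exact hd.ne fun hij => hw.ne (congrArg x hij)
    · rw [hcx, hc ⟨w, hwS⟩]
      exact fun h => hdN i (h ▸ G.mem_outerNeighborColors (u := ⟨w, hwS⟩) hw)
  by_cases huS : u ∈ S
  · obtain ⟨i, -, rfl⟩ := mem_image.1 (hS ▸ huS)
    exact hx_ne i v huv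
  by_cases hvS : v ∈ S
  · obtain ⟨j, -, rfl⟩ := mem_image.1 (hS ▸ hvS)
    exact (hx_ne j u huv.symm).symm
  rw [hc ⟨u, huS⟩, hc ⟨v, hvS⟩]
  exact hc₀ _ _ huv

end SimpleGraph

/-- List-coloring extension lemma (Kostochka–Pelsmajer–West). Let `G` be a finite
simple graph with a `k`-uniform list assignment `L`, and let `x 0, …, x (k-1)` be
`k` distinct vertices forming a set `S`. If `G − S` has a proper `L`-coloring in
which each color appears on at most `⌈|V(G − S)|/k⌉` vertices, and
`|N_G(x_i) \ S| ≤ k − i` for `1 ≤ i ≤ k` (here `x i` with `i : Fin k` plays the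
role of `x_{i+1}`, so the bound is `k - (i+1)`), then `G` has a proper
`L`-coloring in which each color appears on at most `⌈|V(G)|/k⌉` vertices. -/
theorem equitable_list_coloring_extension {V : Type*} [Fintype V] [DecidableEq V]
    (G : SimpleGraph V) [DecidableRel G.Adj] (k : ℕ) (hk : 0 < k)
    (L : V → Finset ℕ) (hL : ∀ v : V, (L v).card = k)
    (x : Fin k → V) (hx : Function.Injective x)
    (S : Finset V) (hS : S = Finset.univ.image x)
    (hnbr : ∀ i : Fin k, ((G.neighborFinset (x i)) \ S).card ≤ k - (i.val + 1))
    (hGS : ∃ c : {v : V // v ∉ S} → ℕ,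
      (∀ v : {v : V // v ∉ S}, c v ∈ L v.val) ∧
      (∀ u v : {v : V // v ∉ S}, G.Adj u.val v.val → c u ≠ c v) ∧
      ∀ α : ℕ,
        (Finset.univ.filter fun v : {v : V // v ∉ S} => c v = α).card ≤
          (Fintype.card {v : V // v ∉ S} + k - 1) / k) :
    ∃ c : V → ℕ,
      (∀ v : V, c v ∈ L v) ∧
      (∀ u v : V, G.Adj u v → c u ≠ c v) ∧
      ∀ α : ℕ,
        (Finset.univ.filter fun v => c v = α).card ≤ (Fintype.card V + k - 1) / k := by
  obtain ⟨c₀, hc₀L, hc₀adj, hc₀card⟩ := hGS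
  obtain ⟨d, hd, hdL⟩ := exists_injective_mem_sdiff (fun i => L (x i))
    (fun i => G.outerNeighborColors c₀ (x i)) fun i => by
      have := G.card_outerNeighborColors_le c₀ (x i)
      have := hnbr i
      have := hL (x i)
      omega
  simp only [mem_sdiff] at hdL
  obtain ⟨c, hcx, hc⟩ := exists_extension_of_injective hS hx c₀ d
  have hcard : Fintype.card {v // v ∉ S} + k = Fintype.card V := by
    have hSk : #S = k := by rw [hS, card_image_of_injective _ hx, card_univ, Fintype.card_fin]
    have := card_le_univ S
    rw [Fintype.card_subtype_compl, Fintype.card_coe]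
    omega
  refine ⟨c, mem_of_extension hS (fun i => (hdL i).1) hc₀L hcx hc,
    fun u v => G.adj_ne_of_extension hS hc₀adj hd (fun i => (hdL i).2) hcx hc, fun a => ?_⟩
  calc #{v | c v = a} ≤ #{v : {v // v ∉ S} | c₀ v = a} + 1 :=
        card_filter_eq_le_of_extension hS hd hcx hc a
    _ ≤ (Fintype.card {v // v ∉ S} + k - 1) / k + 1 := by gcongr; exact hc₀card a
    _ = (Fintype.card V + k - 1) / k := by
        rw [← hcard, show Fintype.card {v // v ∉ S} + k + k - 1
          = Fintype.card {v // v ∉ S} + k - 1 + k by omega, Nat.add_div_right _ hk]
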